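/- arXiv:1410.2881 — 3 statements merged into one kernel-verified Lean document; each statement's English description precedes it below -/
import Mathlib

section
/- For every blocklength n, every finite message alphabet ℳ, every joint probability mass function P_{X^n M} on 𝒳^n × ℳ, every distortion threshold D ∈ ℝ, and every positive integer N, the minimum over all list functions ℒ : ℳ → {subsets of 𝒵^n of cardinality at most N} of P[ min_{z^n ∈ ℒ(M)} d(X^n, z^n) ≥ D ] is equal to the minimum over all pairs of functions m_H : 𝒳^n × ℳ → [N] and z^n : ℳ × [N] → 𝒵^n of P[ d(X^n, z^n(M, m_H(X^n, M))) ≥ D ]. (This establishes the equivalence of the list-reconstruction and henchman formulations of secrecy.) -/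
open scoped BigOperators
open Classical

noncomputable def dseq {X Z : Type*} (d : X → Z → ℝ) {n : ℕ} (x : Fin n → X) (z : Fin n → Z) : ℝ :=
  (∑ i, d (x i) (z i)) / n

/-- **Equivalence of the list-reconstruction and henchman formulations.**
For any joint pmf `P` of `(X^n, M)`, distortion threshold `D` and list size `N`, the
minimum over list functions `ℒ : ℳ → {subsets of 𝒵^n of card ≤ N}` of
`P[min_{z^n ∈ ℒ(M)} d(X^n,z^n) ≥ D]` equals the minimum over henchman encoders
`m_H : 𝒳^n × ℳ → [N]` and eavesdropper decoders `z^n : ℳ × [N] → 𝒵^n` of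
`P[d(X^n, z^n(M, m_H(X^n,M))) ≥ D]`. -/
theorem list_henchman_equivalence
    {X Z M : Type*} [Fintype X] [Fintype Z] [Fintype M]
    [Nonempty X] [Nonempty Z] [Nonempty M]
    (n : ℕ) (hn : 0 < n)
    (d : X → Z → ℝ) (hd_nonneg : ∀ x z, 0 ≤ d x z) (hd_zero : ∀ x, ∃ z, d x z = 0)
    (P : (Fin n → X) × M → ℝ)
    (hP_nonneg : ∀ a, 0 ≤ P a) (hP_sum : ∑ a, P a = 1)
    (D : ℝ) (N : ℕ) (hN : 0 < N) :
    sInf { p : ℝ | ∃ L : M → Finset (Fin n → Z),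
        (∀ m, (L m).card ≤ N) ∧
        p = ∑ a : (Fin n → X) × M, P a *
            (if ∀ z ∈ L a.2, D ≤ dseq d a.1 z then (1:ℝ) else 0) }
    = sInf { p : ℝ | ∃ (mH : (Fin n → X) × M → Fin N) (g : M × Fin N → (Fin n → Z)),
        p = ∑ a : (Fin n → X) × M, P a *
            (if D ≤ dseq d a.1 (g (a.2, mH a)) then (1:ℝ) else 0) } := by
  -- abbreviations
  have hbd : ∀ s : Set ℝ,
      (∀ p ∈ s, 0 ≤ p) → BddBelow s := fun s hs => ⟨0, fun p hp => hs p hp⟩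
  have hsum_nonneg : ∀ f : (Fin n → X) × M → ℝ, (∀ a, f a = 0 ∨ f a = 1) →
      0 ≤ ∑ a : (Fin n → X) × M, P a * f a := by
    intro f hf
    apply Finset.sum_nonneg
    intro a _
    rcases hf a with h | h <;> rw [h] <;> simp [hP_nonneg a]
  apply le_antisymm
  · -- sInf list ≤ sInf hench
    apply le_csInf
    · exact ⟨_, fun _ => ⟨0, hN⟩, fun _ => Classical.arbitrary _, rfl⟩
    rintro p ⟨mH, g, rfl⟩
    set L : M → Finset (Fin n → Z) := fun m => Finset.univ.image (fun k : Fin N => g (m, k)) with hLdef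
    have hmem : (∑ a : (Fin n → X) × M, P a *
        (if ∀ z ∈ L a.2, D ≤ dseq d a.1 z then (1:ℝ) else 0)) ∈
        { p : ℝ | ∃ L : M → Finset (Fin n → Z),
          (∀ m, (L m).card ≤ N) ∧
          p = ∑ a : (Fin n → X) × M, P a *
              (if ∀ z ∈ L a.2, D ≤ dseq d a.1 z then (1:ℝ) else 0) } :=
      ⟨L, fun m => le_trans Finset.card_image_le (by simp), rfl⟩
    refine le_trans (csInf_le ?_ hmem) ?_
    · apply hbd
      rintro q ⟨L', _, rfl⟩
      apply hsum_nonneg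
      intro a; split <;> simp
    · apply Finset.sum_le_sum
      intro a _
      apply mul_le_mul_of_nonneg_left _ (hP_nonneg a)
      by_cases h : ∀ z ∈ L a.2, D ≤ dseq d a.1 z
      · have hz : D ≤ dseq d a.1 (g (a.2, mH a)) :=
          h _ (Finset.mem_image.2 ⟨mH a, Finset.mem_univ _, rfl⟩)
        rw [if_pos hz, if_pos h]
      · rw [if_neg h]; split <;> norm_num
  · -- sInf hench ≤ sInf list
    apply le_csInf
    · exact ⟨_, fun _ => ∅, fun _ => by simp, rfl⟩
    rintro p ⟨L, hL, rfl⟩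
    -- decoder: k-th element of the list of L m
    set g : M × Fin N → (Fin n → Z) :=
      fun q => ((L q.1).toList).getD q.2 (Classical.arbitrary _) with hg
    have hcover : ∀ m, ∀ z ∈ L m, ∃ k : Fin N, g (m, k) = z := by
      intro m z hz
      have hz' : z ∈ (L m).toList := Finset.mem_toList.2 hz
      obtain ⟨i, hi⟩ := List.mem_iff_get.1 hz'
      have hlen : (L m).toList.length = (L m).card := Finset.length_toList _
      have hiN : (i : ℕ) < N := lt_of_lt_of_le (hlen ▸ i.2) (hL m)
      refine ⟨⟨i, hiN⟩, ?_⟩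
      simp only [hg]
      rw [List.getD_eq_getElem _ _ (by simpa using i.2)]
      simpa using hi
    set mH : (Fin n → X) × M → Fin N := fun a =>
      if h : ∃ z ∈ L a.2, dseq d a.1 z < D then
        Classical.choose (hcover a.2 (Classical.choose h) (Classical.choose_spec h).1)
      else ⟨0, hN⟩ with hmH
    refine le_trans (csInf_le ?_ ⟨mH, g, rfl⟩) ?_
    · apply hbd
      rintro q ⟨mH', g', rfl⟩
      apply hsum_nonneg
      intro a; split <;> simp
    · apply Finset.sum_le_sum
      intro a _
      apply mul_le_mul_of_nonneg_left _ (hP_nonneg a)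
      by_cases h : ∀ z ∈ L a.2, D ≤ dseq d a.1 z
      · rw [if_pos h]; split <;> norm_num
      · push_neg at h
        have h1 : g (a.2, mH a) = Classical.choose h := by
          simp only [hmH, dif_pos h]
          exact Classical.choose_spec (hcover a.2 (Classical.choose h) (Classical.choose_spec h).1)
        have h2 : ¬ D ≤ dseq d a.1 (g (a.2, mH a)) := by
          rw [h1]; exact not_le.2 (Classical.choose_spec h).2
        rw [if_neg h2]; split <;> norm_num
end

section
/- If X_1, …, X_m are i.i.d. random variables taking values in the interval [0, a] (a > 0) with E[X_i] = p, then for every k > 0, P[ Σ_{i=1}^m X_i > k ] ≤ ( e · m · p / k )^{k/a}. -/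
open scoped BigOperators
open MeasureTheory ProbabilityTheory

/-- **Corollary (Chernoff bound for bounded i.i.d. sums).** If `X₁, …, X_m` are i.i.d.
random variables taking values in `[0,a]` with mean `p`, then for every `k > 0`,
`P[∑ Xᵢ > k] ≤ (e·m·p/k)^{k/a}`. -/
theorem chernoff_bounded
    {Ω : Type*} [MeasurableSpace Ω] (μ : Measure Ω) [IsProbabilityMeasure μ]
    (m : ℕ) (a : ℝ) (ha : 0 < a) (p : ℝ) (X : Fin m → Ω → ℝ)
    (hmeas : ∀ i, Measurable (X i))
    (hindep : iIndepFun X μ)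
    (hident : ∀ i j, IdentDistrib (X i) (X j) μ μ)
    (hval : ∀ i, ∀ᵐ ω ∂μ, X i ω ∈ Set.Icc (0:ℝ) a)
    (hmean : ∀ i, ∫ ω, X i ω ∂μ = p)
    (k : ℝ) (hk : 0 < k) :
    (μ {ω | k < ∑ i, X i ω}).toReal ≤ (Real.exp 1 * m * p / k) ^ (k / a) := by
  have hprob : (μ {ω | k < ∑ i, X i ω}).toReal ≤ 1 := by
    rw [← ENNReal.toReal_one]
    exact ENNReal.toReal_mono ENNReal.one_ne_top (prob_le_one)
  rcases le_or_gt k (Real.exp 1 * m * p) with hcase | hcase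
  · -- trivial case: RHS ≥ 1
    have h1 : (1:ℝ) ≤ Real.exp 1 * m * p / k := (one_le_div hk).2 hcase
    exact hprob.trans (Real.one_le_rpow h1 (by positivity))
  -- now e·m·p < k
  rcases Nat.eq_zero_or_pos m with hm | hm
  · subst hm
    have : {ω | k < ∑ i : Fin 0, X i ω} = ∅ := by
      ext ω; simp [hk.not_gt]
    rw [this]
    simp only [measure_empty, ENNReal.toReal_zero]
    refine Real.rpow_nonneg ?_ _
    norm_num
  have hm0 : (0:ℝ) < m := by exact_mod_cast hm
  have i0 : Fin m := ⟨0, hm⟩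
  have hp0 : 0 ≤ p := by
    rw [← hmean i0]
    refine integral_nonneg_of_ae ?_
    filter_upwards [hval i0] with ω hω using hω.1
  rcases hp0.eq_or_lt with hp | hp
  · -- p = 0 : all X i = 0 a.e.
    have hzero : ∀ i, ∀ᵐ ω ∂μ, X i ω = 0 := by
      intro i
      have hae : 0 ≤ᵐ[μ] X i := by
        filter_upwards [hval i] with ω hω using hω.1
      have := (integral_eq_zero_iff_of_nonneg_ae hae ?_).1 ?_
      · filter_upwards [this] with ω hω using hω
      · refine (integrable_const a).mono' (hmeas i).aestronglyMeasurable ?_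
        filter_upwards [hval i] with ω hω
        rw [Real.norm_eq_abs, abs_of_nonneg hω.1]; exact hω.2
      · rw [hmean i, ← hp]
    have hsum : ∀ᵐ ω ∂μ, ∑ i, X i ω = 0 := by
      have := ae_all_iff.2 hzero
      filter_upwards [this] with ω hω
      exact Finset.sum_eq_zero fun i _ => hω i
    have hset : μ {ω | k < ∑ i, X i ω} = 0 := by
      refine measure_mono_null ?_ (ae_iff.1 hsum)
      intro ω hω
      simp only [Set.mem_setOf_eq] at hω ⊢
      intro h; rw [h] at hω; exact hk.not_gt hω
    rw [hset]
    simp only [ENNReal.toReal_zero]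
    positivity
  -- main case: 0 < p, 0 < m, e·m·p < k
  have hmp : (0:ℝ) < m * p := by positivity
  have hkmp : Real.exp 1 < k / (m * p) := by
    rw [lt_div_iff₀ hmp]; linarith [hcase]
  have hL1 : (1:ℝ) < Real.log (k / (m * p)) := by
    rw [← Real.log_exp 1]
    exact Real.log_lt_log (Real.exp_pos 1) hkmp
  set L := Real.log (k / (m * p)) with hL
  set t := L / a with hT
  have ht : 0 < t := div_pos (by linarith) ha
  have hexp_ta : Real.exp (t * a) = k / (m * p) := by
    rw [hT, div_mul_cancel₀ _ ha.ne', hL, Real.exp_log (by positivity)]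
  -- integrability of exp(t * X i)
  have hint : ∀ i, Integrable (fun ω => Real.exp (t * X i ω)) μ := by
    intro i
    refine (integrable_const (Real.exp (t * a))).mono'
      (((hmeas i).const_mul t).exp.aestronglyMeasurable) ?_
    filter_upwards [hval i] with ω hω
    rw [Real.norm_eq_abs, abs_of_pos (Real.exp_pos _), Real.exp_le_exp]
    exact mul_le_mul_of_nonneg_left hω.2 ht.le
  have hintX : ∀ i, Integrable (X i) μ := by
    intro i
    refine (integrable_const a).mono' (hmeas i).aestronglyMeasurable ?_
    filter_upwards [hval i] with ω hω
    rw [Real.norm_eq_abs, abs_of_nonneg hω.1]; exact hω.2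
  -- mgf bound per coordinate
  have hc : ConvexOn ℝ Set.univ Real.exp := convexOn_exp
  have hmgf : ∀ i, mgf (X i) μ t ≤ Real.exp (k / (m * a) - p / a) := by
    intro i
    have hpt : ∀ᵐ ω ∂μ, Real.exp (t * X i ω)
        ≤ 1 + (X i ω / a) * (Real.exp (t * a) - 1) := by
      filter_upwards [hval i] with ω hω
      obtain ⟨hx0, hxa⟩ := hω
      have hb1 : (0:ℝ) ≤ 1 - X i ω / a := by
        rw [sub_nonneg, div_le_one ha]; exact hxa
      have hb2 : (0:ℝ) ≤ X i ω / a := div_nonneg hx0 ha.le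
      have := hc.2 (Set.mem_univ (0:ℝ)) (Set.mem_univ (t * a)) hb1 hb2 (by ring)
      simp only [smul_eq_mul, mul_zero, zero_add, Real.exp_zero, mul_one] at this
      have harg : X i ω / a * (t * a) = t * X i ω := by
        field_simp
      rw [harg] at this
      calc Real.exp (t * X i ω) ≤ (1 - X i ω / a) * 1 + X i ω / a * Real.exp (t * a) := by
            linarith [this]
        _ = 1 + (X i ω / a) * (Real.exp (t * a) - 1) := by ring
    have hintR : Integrable (fun ω => 1 + (X i ω / a) * (Real.exp (t * a) - 1)) μ :=
      (integrable_const 1).add (((hintX i).div_const a).mul_const _)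
    have h1 : mgf (X i) μ t ≤ ∫ ω, (1 + (X i ω / a) * (Real.exp (t * a) - 1)) ∂μ :=
      integral_mono_ae (hint i) hintR hpt
    have h2 : ∫ ω, (1 + (X i ω / a) * (Real.exp (t * a) - 1)) ∂μ
        = 1 + (p / a) * (Real.exp (t * a) - 1) := by
      rw [integral_add (integrable_const 1) (((hintX i).div_const a).mul_const _),
        integral_const, integral_mul_const]
      have : ∫ ω, X i ω / a ∂μ = p / a := by
        rw [integral_div, hmean i]
      rw [this]
      simp
    have h3 : 1 + (p / a) * (Real.exp (t * a) - 1) = 1 + (k / (m * a) - p / a) := by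
      rw [hexp_ta]
      field_simp
    calc mgf (X i) μ t ≤ 1 + (k / (m * a) - p / a) := by rw [← h3, ← h2]; exact h1
      _ ≤ Real.exp (k / (m * a) - p / a) := by
          linarith [Real.add_one_le_exp (k / (m * a) - p / a)]
  -- Chernoff
  have hchern : (μ {ω | k ≤ (∑ i, X i) ω}).toReal
      ≤ Real.exp (-t * k) * mgf (∑ i, X i) μ t :=
    measure_ge_le_exp_mul_mgf k ht.le
      (hindep.integrable_exp_mul_sum hmeas (fun i _ => hint i))
  have hmgfsum : mgf (∑ i, X i) μ t ≤ Real.exp ((m : ℝ) * (k / (m * a) - p / a)) := by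
    rw [hindep.mgf_sum hmeas]
    calc ∏ i, mgf (X i) μ t ≤ ∏ _i : Fin m, Real.exp (k / (m * a) - p / a) :=
          Finset.prod_le_prod (fun i _ => mgf_nonneg) (fun i _ => hmgf i)
      _ = Real.exp (k / (m * a) - p / a) ^ m := by
          rw [Finset.prod_const, Finset.card_univ, Fintype.card_fin]
      _ = Real.exp ((m : ℝ) * (k / (m * a) - p / a)) := by
          rw [← Real.exp_nat_mul]
  have hstep : (μ {ω | k < ∑ i, X i ω}).toReal
      ≤ Real.exp (-t * k) * Real.exp ((m : ℝ) * (k / (m * a) - p / a)) := by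
    refine le_trans ?_ (le_trans hchern ?_)
    · apply ENNReal.toReal_mono (measure_ne_top _ _)
      apply measure_mono
      intro ω hω
      simp only [Set.mem_setOf_eq, Finset.sum_apply] at hω ⊢
      exact hω.le
    · exact mul_le_mul_of_nonneg_left hmgfsum (Real.exp_pos _).le
  refine hstep.trans ?_
  rw [← Real.exp_add]
  have hrhs : (Real.exp 1 * m * p / k) ^ (k / a) = Real.exp ((1 - L) * (k / a)) := by
    rw [Real.rpow_def_of_pos (by positivity)]
    congr 1
    have hlog : Real.log (Real.exp 1 * m * p / k) = 1 - L := by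
      rw [hL, Real.log_div (by positivity) hk.ne', Real.log_div hk.ne' hmp.ne',
        Real.log_mul (by positivity) hp.ne', Real.log_mul (Real.exp_ne_zero 1) hm0.ne',
        Real.log_exp, Real.log_mul hm0.ne' hp.ne']
      ring
    rw [hlog]
  rw [hrhs, Real.exp_le_exp]
  have hma : (m : ℝ) * (k / (m * a) - p / a) = k / a - m * p / a := by
    field_simp
  rw [hma, hT]
  have : -(L / a) * k = -(L * (k / a)) := by ring
  rw [this]
  have hpa : 0 ≤ (m : ℝ) * p / a := by positivity
  have : (1 - L) * (k / a) = k / a - L * (k / a) := by ring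
  linarith
end

section
/- Let 𝒞 = {X^n(m,k)} for (m,k) ∈ [2^{nR}] × [2^{nR_0}] be a random codebook with each codeword drawn independently according to ∏_{i=1}^n P_X. Let X^n be i.i.d. P_X, K ~ Unif[2^{nR_0}] independent of X^n, and let the likelihood encoder be the stochastic encoder P_{M|X^n K}(m | x^n, k) ∝ ∏_{i=1}^n 1{x_i = x_i(m,k)} (with an arbitrary index chosen if no codeword for key k equals x^n). Define the induced distribution P_{X^n M K} = P_{X^n} P_K P_{M|X^n K} and the idealized distribution Q_{X^n M K}(x^n, m, k) := 2^{−n(R+R_0)} ∏_{i=1}^n 1{x_i = x_i(m,k)}. If R > H(X), then lim_{n→∞} E_𝒞 ‖ P_{X^n M K} − Q_{X^n M K} ‖_TV = 0. -/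
open scoped BigOperators
open Classical Filter

def IsPMF {A : Type*} [Fintype A] (p : A → ℝ) : Prop :=
  (∀ a, 0 ≤ p a) ∧ ∑ a, p a = 1

noncomputable def entropy {A : Type*} [Fintype A] (p : A → ℝ) : ℝ :=
  -∑ a, p a * Real.logb 2 (p a)

noncomputable def iidPMF {X : Type*} [Fintype X] (P : X → ℝ) (n : ℕ) : (Fin n → X) → ℝ :=
  fun x => ∏ i, P (x i)

/-- Total variation distance between pmfs on a finite alphabet. -/
noncomputable def tvDist {A : Type*} [Fintype A] (p q : A → ℝ) : ℝ :=
  (∑ a, |p a - q a|) / 2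

/-- Number of messages/keys at rate `R` and blocklength `n`. -/
noncomputable def nExp (R : ℝ) (n : ℕ) : ℕ := max 1 (Nat.floor ((2:ℝ) ^ (R * n)))

/-- The likelihood encoder for a codebook `C = {x^n(m,k)}` and exact reconstruction:
`P(m|x^n,k) ∝ ∏ᵢ 1{xᵢ = xᵢ(m,k)}`, with an arbitrary (uniform) choice when no codeword
for key `k` equals `x^n`. -/
noncomputable def likEnc {X : Type*} [Fintype X] {n M K : ℕ}
    (C : Fin M × Fin K → (Fin n → X)) (x : Fin n → X) (k : Fin K) (m : Fin M) : ℝ :=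
  if (Finset.univ.filter (fun m' : Fin M => C (m', k) = x)).card = 0 then (M : ℝ)⁻¹
  else if C (m, k) = x
    then ((Finset.univ.filter (fun m' : Fin M => C (m', k) = x)).card : ℝ)⁻¹
    else 0

/-- The system-induced distribution `P_{X^n M K}` of the likelihood encoder:
`X^n` i.i.d. `P`, `K` uniform, `M ~ P_{M|X^n K}`. -/
noncomputable def indDist {X : Type*} [Fintype X] (P : X → ℝ) {n M K : ℕ}
    (C : Fin M × Fin K → (Fin n → X)) : (Fin n → X) × Fin M × Fin K → ℝ :=
  fun a => iidPMF P n a.1 * (K : ℝ)⁻¹ * likEnc C a.1 a.2.2 a.2.1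

/-- The idealized distribution `Q_{X^n M K}(x^n,m,k) = 2^{-n(R+R₀)} ∏ᵢ 1{xᵢ = xᵢ(m,k)}`
(uniform over the codewords of the codebook). -/
noncomputable def idealDist {X : Type*} [Fintype X] {n M K : ℕ}
    (C : Fin M × Fin K → (Fin n → X)) : (Fin n → X) × Fin M × Fin K → ℝ :=
  fun a => ((M : ℝ) * (K : ℝ))⁻¹ * (if a.1 = C (a.2.1, a.2.2) then (1:ℝ) else 0)


section Generic
variable {Y : Type*} [Fintype Y] {M : ℕ}

lemma sum_pi_prod (g : Fin M → Y → ℝ) :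
    ∑ c : Fin M → Y, ∏ m, g m (c m) = ∏ m, ∑ y, g m y :=
  (Fintype.prod_sum _).symm

lemma sum_pi_prod_mul (w : Y → ℝ) (hw : ∑ y, w y = 1) (h : Y → ℝ) (i : Fin M) :
    ∑ c : Fin M → Y, (∏ m, w (c m)) * h (c i) = ∑ y, w y * h y := by
  have : ∀ c : Fin M → Y, (∏ m, w (c m)) * h (c i)
      = ∏ m, (w (c m) * if m = i then h (c m) else 1) := by
    intro c
    rw [Finset.prod_mul_distrib, Finset.prod_ite_eq' Finset.univ i (fun m => h (c m))]
    simp only [Finset.mem_univ, if_true]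
  rw [Finset.sum_congr rfl (fun c _ => this c),
    sum_pi_prod (fun m y => w y * if m = i then h y else 1)]
  rw [Finset.prod_eq_single i]
  · simp
  · intro m _ hm
    simp [hm, hw]
  · simp

lemma sum_pi_prod_mul_mul (w : Y → ℝ) (hw : ∑ y, w y = 1) (h₁ h₂ : Y → ℝ) (i j : Fin M)
    (hij : i ≠ j) :
    ∑ c : Fin M → Y, (∏ m, w (c m)) * (h₁ (c i) * h₂ (c j))
      = (∑ y, w y * h₁ y) * (∑ y, w y * h₂ y) := by
  have : ∀ c : Fin M → Y, (∏ m, w (c m)) * (h₁ (c i) * h₂ (c j))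
      = ∏ m, (w (c m) * ((if m = i then h₁ (c m) else 1) * (if m = j then h₂ (c m) else 1))) := by
    intro c
    rw [Finset.prod_mul_distrib, Finset.prod_mul_distrib,
      Finset.prod_ite_eq' Finset.univ i (fun m => h₁ (c m)),
      Finset.prod_ite_eq' Finset.univ j (fun m => h₂ (c m))]
    simp [mul_assoc]
  rw [Finset.sum_congr rfl (fun c _ => this c),
    sum_pi_prod (fun m y => w y * ((if m = i then h₁ y else 1) * if m = j then h₂ y else 1))]
  rw [← Finset.prod_subset (Finset.subset_univ ({i, j} : Finset (Fin M)))]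
  · rw [Finset.prod_pair hij]
    simp [hij, hij.symm]
  · intro m _ hm
    simp only [Finset.mem_insert, Finset.mem_singleton, not_or] at hm
    simp [hm.1, hm.2, hw]
end Generic

section Generic2
variable {Y : Type*} [Fintype Y] {M : ℕ}

lemma exp_abs_le_sqrt (w : Y → ℝ) (hw0 : ∀ y, 0 ≤ w y) (hw : ∑ y, w y = 1)
    (Z : (Fin M → Y) → ℝ) :
    ∑ c : Fin M → Y, (∏ m, w (c m)) * |Z c|
      ≤ Real.sqrt (∑ c : Fin M → Y, (∏ m, w (c m)) * Z c ^ 2) := by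
  have hWnn : ∀ c : Fin M → Y, 0 ≤ ∏ m, w (c m) := fun c =>
    Finset.prod_nonneg fun m _ => hw0 (c m)
  have hWsum : ∑ c : Fin M → Y, ∏ m, w (c m) = 1 := by
    rw [sum_pi_prod (fun _ y => w y)]
    simp [hw]
  have h1 : ∀ c : Fin M → Y, (∏ m, w (c m)) * |Z c|
      = Real.sqrt (∏ m, w (c m)) * Real.sqrt ((∏ m, w (c m)) * Z c ^ 2) := by
    intro c
    rw [← Real.sqrt_mul (hWnn c)]
    have h2 : (∏ m, w (c m)) * ((∏ m, w (c m)) * Z c ^ 2) = ((∏ m, w (c m)) * |Z c|) ^ 2 := by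
      rw [mul_pow, sq_abs]; ring
    rw [h2, Real.sqrt_sq (mul_nonneg (hWnn c) (abs_nonneg _))]
  calc ∑ c : Fin M → Y, (∏ m, w (c m)) * |Z c|
      = ∑ c : Fin M → Y, Real.sqrt (∏ m, w (c m)) * Real.sqrt ((∏ m, w (c m)) * Z c ^ 2) :=
        Finset.sum_congr rfl fun c _ => h1 c
    _ ≤ Real.sqrt (∑ c : Fin M → Y, ∏ m, w (c m))
        * Real.sqrt (∑ c : Fin M → Y, (∏ m, w (c m)) * Z c ^ 2) :=
        Real.sum_sqrt_mul_sqrt_le _ hWnn (fun c => mul_nonneg (hWnn c) (sq_nonneg _))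
    _ = Real.sqrt (∑ c : Fin M → Y, (∏ m, w (c m)) * Z c ^ 2) := by
        rw [hWsum, Real.sqrt_one, one_mul]

end Generic2

section Generic3
variable {Y : Type*} [Fintype Y] {M : ℕ}

lemma binom_var (w : Y → ℝ) (hw : ∑ y, w y = 1) (h : Y → ℝ)
    (hh : ∀ y, h y = 0 ∨ h y = 1) :
    ∑ c : Fin M → Y, (∏ m, w (c m)) * (∑ m, (h (c m) - (∑ y, w y * h y))) ^ 2
      = M * ((∑ y, w y * h y) - (∑ y, w y * h y) ^ 2) := by
  set p := ∑ y, w y * h y with hp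
  have hdev : ∑ y, w y * (h y - p) = 0 := by
    simp_rw [mul_sub]
    rw [Finset.sum_sub_distrib, ← Finset.sum_mul, hw]
    simp [hp]
  have hdev2 : ∑ y, w y * (h y - p) ^ 2 = p - p ^ 2 := by
    have : ∀ y, w y * (h y - p) ^ 2 = w y * h y ^ 2 - 2 * p * (w y * h y) + p ^ 2 * w y := by
      intro y; ring
    rw [Finset.sum_congr rfl fun y _ => this y]
    have hsq : ∀ y : Y, h y ^ 2 = h y := by
      intro y; rcases hh y with h0 | h0 <;> simp [h0]
    simp_rw [hsq]
    rw [Finset.sum_add_distrib, Finset.sum_sub_distrib, ← Finset.mul_sum, ← Finset.mul_sum,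
      ← hp, hw]
    ring
  have key : ∀ m m' : Fin M,
      ∑ c : Fin M → Y, (∏ i, w (c i)) * ((h (c m) - p) * (h (c m') - p))
        = if m = m' then p - p ^ 2 else 0 := by
    intro m m'
    by_cases hmm : m = m'
    · subst hmm
      simp only [if_pos rfl]
      have heq : ∀ c : Fin M → Y, (∏ i, w (c i)) * ((h (c m) - p) * (h (c m) - p))
          = (∏ i, w (c i)) * (h (c m) - p) ^ 2 := by
        intro c; rw [sq]
      rw [Finset.sum_congr rfl fun c _ => heq c,
        sum_pi_prod_mul w hw (fun y => (h y - p) ^ 2) m, hdev2]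
      simp
    · rw [if_neg hmm, sum_pi_prod_mul_mul w hw (fun y => h y - p) (fun y => h y - p) m m' hmm,
        hdev]
      ring
  calc ∑ c : Fin M → Y, (∏ m, w (c m)) * (∑ m, (h (c m) - p)) ^ 2
      = ∑ c : Fin M → Y, ∑ m, ∑ m', (∏ i, w (c i)) * ((h (c m) - p) * (h (c m') - p)) := by
        refine Finset.sum_congr rfl fun c _ => ?_
        rw [sq, Finset.sum_mul_sum]
        rw [Finset.mul_sum]
        refine Finset.sum_congr rfl fun m _ => ?_
        rw [Finset.mul_sum]
    _ = ∑ m, ∑ m', ∑ c : Fin M → Y, (∏ i, w (c i)) * ((h (c m) - p) * (h (c m') - p)) := by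
        rw [Finset.sum_comm]
        refine Finset.sum_congr rfl fun m _ => Finset.sum_comm
    _ = ∑ m : Fin M, (p - p ^ 2) := by
        refine Finset.sum_congr rfl fun m _ => ?_
        rw [Finset.sum_congr rfl fun m' _ => key m m']
        simp
    _ = M * (p - p ^ 2) := by simp [mul_comm]; ring

end Generic3

section Generic4
variable {Y : Type*} [Fintype Y] {M : ℕ}

lemma exp_abs_dev_le (w : Y → ℝ) (hw0 : ∀ y, 0 ≤ w y) (hw : ∑ y, w y = 1)
    (h : Y → ℝ) (hh : ∀ y, h y = 0 ∨ h y = 1) (hM : M ≠ 0) :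
    ∑ c : Fin M → Y, (∏ m, w (c m)) * |(∑ y, w y * h y) - (∑ m, h (c m)) / M|
      ≤ Real.sqrt ((∑ y, w y * h y) / M) := by
  set p := ∑ y, w y * h y with hp
  have hMpos : (0:ℝ) < M := by positivity
  refine le_trans (exp_abs_le_sqrt w hw0 hw _) (Real.sqrt_le_sqrt ?_)
  have hZ : ∀ c : Fin M → Y, (p - (∑ m, h (c m)) / M) ^ 2
      = (∑ m, (h (c m) - p)) ^ 2 / (M:ℝ) ^ 2 := by
    intro c
    rw [Finset.sum_sub_distrib]
    simp only [Finset.sum_const, Finset.card_univ, Fintype.card_fin, nsmul_eq_mul]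
    field_simp
    ring
  calc ∑ c : Fin M → Y, (∏ m, w (c m)) * (p - (∑ m, h (c m)) / M) ^ 2
      = (∑ c : Fin M → Y, (∏ m, w (c m)) * (∑ m, (h (c m) - p)) ^ 2) / (M:ℝ) ^ 2 := by
        rw [Finset.sum_div]
        exact Finset.sum_congr rfl fun c _ => by rw [hZ c, mul_div_assoc]
    _ = (M * (p - p ^ 2)) / (M:ℝ) ^ 2 := by rw [binom_var w hw h hh]
    _ ≤ (M * p) / (M:ℝ) ^ 2 := by
        apply div_le_div_of_nonneg_right ?_ (by positivity)
        · nlinarith [sq_nonneg p]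
    _ = p / M := by field_simp

end Generic4

section Generic5
variable {Y : Type*} [Fintype Y] {M : ℕ}

lemma sum_sq_dev (w : Y → ℝ) (hw : ∑ y, w y = 1) (g : Y → ℝ)
    (hg : ∑ y, w y * g y = 0) :
    ∑ c : Fin M → Y, (∏ m, w (c m)) * (∑ m, g (c m)) ^ 2
      = M * ∑ y, w y * g y ^ 2 := by
  have key : ∀ m m' : Fin M,
      ∑ c : Fin M → Y, (∏ i, w (c i)) * (g (c m) * g (c m'))
        = if m = m' then ∑ y, w y * g y ^ 2 else 0 := by
    intro m m'
    by_cases hmm : m = m'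
    · subst hmm
      simp only [if_pos rfl]
      have heq : ∀ c : Fin M → Y, (∏ i, w (c i)) * (g (c m) * g (c m))
          = (∏ i, w (c i)) * g (c m) ^ 2 := by intro c; rw [sq]
      rw [Finset.sum_congr rfl fun c _ => heq c,
        sum_pi_prod_mul w hw (fun y => g y ^ 2) m]
      simp
    · rw [if_neg hmm, sum_pi_prod_mul_mul w hw g g m m' hmm, hg]
      ring
  calc ∑ c : Fin M → Y, (∏ m, w (c m)) * (∑ m, g (c m)) ^ 2
      = ∑ c : Fin M → Y, ∑ m, ∑ m', (∏ i, w (c i)) * (g (c m) * g (c m')) := by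
        refine Finset.sum_congr rfl fun c _ => ?_
        rw [sq, Finset.sum_mul_sum, Finset.mul_sum]
        refine Finset.sum_congr rfl fun m _ => ?_
        rw [Finset.mul_sum]
    _ = ∑ m, ∑ m', ∑ c : Fin M → Y, (∏ i, w (c i)) * (g (c m) * g (c m')) := by
        rw [Finset.sum_comm]
        refine Finset.sum_congr rfl fun m _ => Finset.sum_comm
    _ = ∑ m : Fin M, ∑ y, w y * g y ^ 2 := by
        refine Finset.sum_congr rfl fun m _ => ?_
        rw [Finset.sum_congr rfl fun m' _ => key m m']
        simp
    _ = M * ∑ y, w y * g y ^ 2 := by simp [mul_comm]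

end Generic5


section Source
variable {X : Type*} [Fintype X] (P : X → ℝ)

lemma iid_sum_one (hP : IsPMF P) (n : ℕ) : ∑ x : Fin n → X, iidPMF P n x = 1 := by
  simp only [iidPMF]
  rw [sum_pi_prod (fun (_ : Fin n) (a : X) => P a)]
  simp [hP.2]

lemma iid_nonneg (hP : IsPMF P) (n : ℕ) (x : Fin n → X) : 0 ≤ iidPMF P n x :=
  Finset.prod_nonneg fun i _ => hP.1 (x i)

lemma mean_L (hP : IsPMF P) :
    ∑ a, P a * (-Real.logb 2 (P a) - entropy P) = 0 := by
  simp only [mul_sub, mul_neg]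
  rw [Finset.sum_sub_distrib, ← Finset.sum_mul, hP.2, entropy]
  simp [Finset.sum_neg_distrib]

lemma entropy_nonneg (hP : IsPMF P) : 0 ≤ entropy P := by
  rw [entropy]
  rw [neg_nonneg]
  apply Finset.sum_nonpos
  intro a _
  have h1 : P a ≤ 1 := by
    rw [← hP.2]
    exact Finset.single_le_sum (fun b _ => hP.1 b) (Finset.mem_univ a)
  exact mul_nonpos_of_nonneg_of_nonpos (hP.1 a)
    (Real.logb_nonpos (by norm_num) (hP.1 a) h1)

/-- Chebyshev bound on the atypical set. -/
lemma atypical_bound (hP : IsPMF P) (n : ℕ) (hn : 1 ≤ n) (δ : ℝ) (hδ : 0 < δ) :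
    ∑ x ∈ Finset.univ.filter
        (fun x : Fin n → X => iidPMF P n x < (2:ℝ) ^ (-((entropy P + δ) * n))),
      iidPMF P n x
      ≤ (∑ a, P a * (-Real.logb 2 (P a) - entropy P) ^ 2) / (n * δ ^ 2) := by
  set H := entropy P with hH
  set g : X → ℝ := fun a => -Real.logb 2 (P a) - H with hg
  set t : ℝ := (2:ℝ) ^ (-((H + δ) * n)) with ht
  have hnpos : (0:ℝ) < n := by exact_mod_cast hn
  have hnd : (0:ℝ) < (n * δ) ^ 2 := by positivity
  have point : ∀ x : Fin n → X, iidPMF P n x < t →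
      iidPMF P n x ≤ iidPMF P n x * (∑ i, g (x i)) ^ 2 / ((n:ℝ) * δ) ^ 2 := by
    intro x hx
    rcases eq_or_lt_of_le (iid_nonneg P hP n x) with h0 | h0
    · rw [← h0]; simp
    · have hne : ∀ i : Fin n, P (x i) ≠ 0 := by
        intro i
        have := Finset.prod_ne_zero_iff.mp (ne_of_gt h0)
        exact this i (Finset.mem_univ i)
      have hlog : Real.logb 2 (iidPMF P n x) = ∑ i, Real.logb 2 (P (x i)) := by
        rw [iidPMF]
        exact Real.logb_prod _ _ (fun i _ => hne i)
      have hlt : Real.logb 2 (iidPMF P n x) < -((H + δ) * n) := by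
        calc Real.logb 2 (iidPMF P n x) < Real.logb 2 t :=
              Real.logb_lt_logb (by norm_num) h0 hx
          _ = -((H + δ) * n) := Real.logb_rpow (by norm_num) (by norm_num)
      have hsum : (n:ℝ) * δ ≤ ∑ i, g (x i) := by
        have : (∑ i, g (x i)) = -(∑ i, Real.logb 2 (P (x i))) - n * H := by
          simp [hg, Finset.sum_sub_distrib, Finset.sum_neg_distrib, mul_comm]
        rw [this, ← hlog]
        nlinarith [hlt]
      have hsq : ((n:ℝ) * δ) ^ 2 ≤ (∑ i, g (x i)) ^ 2 := by
        apply pow_le_pow_left₀ (by positivity) hsum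
      calc iidPMF P n x = iidPMF P n x * (((n:ℝ) * δ) ^ 2) / ((n:ℝ) * δ) ^ 2 := by
            field_simp
        _ ≤ iidPMF P n x * (∑ i, g (x i)) ^ 2 / ((n:ℝ) * δ) ^ 2 := by
            gcongr
  calc ∑ x ∈ Finset.univ.filter (fun x : Fin n → X => iidPMF P n x < t), iidPMF P n x
      ≤ ∑ x ∈ Finset.univ.filter (fun x : Fin n → X => iidPMF P n x < t),
          iidPMF P n x * (∑ i, g (x i)) ^ 2 / ((n:ℝ) * δ) ^ 2 := by
        apply Finset.sum_le_sum
        intro x hx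
        exact point x (Finset.mem_filter.mp hx).2
    _ ≤ ∑ x : Fin n → X, iidPMF P n x * (∑ i, g (x i)) ^ 2 / ((n:ℝ) * δ) ^ 2 := by
        apply Finset.sum_le_sum_of_subset_of_nonneg (Finset.filter_subset _ _)
        intro x _ _
        apply div_nonneg (mul_nonneg (iid_nonneg P hP n x) (sq_nonneg _)) (le_of_lt hnd)
    _ = (∑ x : Fin n → X, iidPMF P n x * (∑ i, g (x i)) ^ 2) / ((n:ℝ) * δ) ^ 2 := by
        rw [Finset.sum_div]
    _ = ((n:ℝ) * ∑ a, P a * g a ^ 2) / ((n:ℝ) * δ) ^ 2 := by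
        congr 1
        simp only [iidPMF]
        exact sum_sq_dev P hP.2 g (mean_L P hP)
    _ = (∑ a, P a * g a ^ 2) / ((n:ℝ) * δ ^ 2) := by
        rw [mul_pow]
        field_simp

/-- Bound on the typical-set part. -/
lemma typical_bound (hP : IsPMF P) (n M : ℕ) (t : ℝ) (htpos : 0 < t) (hM : (0:ℝ) < M) :
    ∑ x ∈ Finset.univ.filter (fun x : Fin n → X => t ≤ iidPMF P n x),
        Real.sqrt (iidPMF P n x / M)
      ≤ (Real.sqrt (t * M))⁻¹ := by
  have hstM : Real.sqrt (t * M) = Real.sqrt t * Real.sqrt M := Real.sqrt_mul htpos.le _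
  have hsqt : (0:ℝ) < Real.sqrt t := Real.sqrt_pos.mpr htpos
  have hsqM : (0:ℝ) < Real.sqrt M := Real.sqrt_pos.mpr hM
  calc ∑ x ∈ Finset.univ.filter (fun x : Fin n → X => t ≤ iidPMF P n x),
        Real.sqrt (iidPMF P n x / M)
      ≤ ∑ x ∈ Finset.univ.filter (fun x : Fin n → X => t ≤ iidPMF P n x),
          iidPMF P n x / Real.sqrt (t * M) := by
        apply Finset.sum_le_sum
        intro x hx
        have hxt : t ≤ iidPMF P n x := (Finset.mem_filter.mp hx).2
        have hxpos : 0 < iidPMF P n x := lt_of_lt_of_le htpos hxt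
        rw [Real.sqrt_div (iid_nonneg P hP n x), hstM, ← div_div]
        gcongr
        rw [le_div_iff₀ hsqt]
        nlinarith [Real.sqrt_le_sqrt hxt, Real.mul_self_sqrt hxpos.le,
          Real.sqrt_nonneg (iidPMF P n x), Real.sqrt_le_sqrt htpos.le]
    _ ≤ (∑ x : Fin n → X, iidPMF P n x) / Real.sqrt (t * M) := by
        rw [Finset.sum_div]
        apply Finset.sum_le_sum_of_subset_of_nonneg (Finset.filter_subset _ _)
        intro x _ _
        exact div_nonneg (iid_nonneg P hP n x) (Real.sqrt_nonneg _)
    _ = (Real.sqrt (t * M))⁻¹ := by rw [iid_sum_one P hP n, one_div]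

end Source

noncomputable def empDist {X : Type*} [Fintype X] {n M : ℕ} (c : Fin M → (Fin n → X)) :
    (Fin n → X) → ℝ :=
  fun x => ((Finset.univ.filter (fun m => c m = x)).card : ℝ) / M

section Reduction
variable {X : Type*} [Fintype X] (P : X → ℝ)

lemma tv_eq {n M K : ℕ} (hP : IsPMF P) (hM : M ≠ 0) (hK : K ≠ 0)
    (C : Fin M × Fin K → (Fin n → X)) :
    tvDist (indDist P C) (idealDist C)
      = (K:ℝ)⁻¹ * ∑ k : Fin K, tvDist (iidPMF P n) (empDist (fun m => C (m, k))) := by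
  have hMR : (0:ℝ) < M := by positivity
  have hKR : (0:ℝ) < K := by positivity
  have key : ∀ (x : Fin n → X) (k : Fin K),
      ∑ m : Fin M, |indDist P C (x, m, k) - idealDist C (x, m, k)|
        = (K:ℝ)⁻¹ * |iidPMF P n x - empDist (fun m => C (m, k)) x| := by
    intro x k
    have hemp : empDist (fun m => C (m, k)) x
        = ((Finset.univ.filter (fun m' : Fin M => C (m', k) = x)).card : ℝ) / M := rfl
    by_cases hN : (Finset.univ.filter (fun m' : Fin M => C (m', k) = x)).card = 0
    · have hno : ∀ m : Fin M, ¬ (C (m, k) = x) := by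
        intro m hm
        have : m ∈ Finset.univ.filter (fun m' : Fin M => C (m', k) = x) := by
          simp [hm]
        rw [Finset.card_eq_zero.mp hN] at this
        exact absurd this (Finset.notMem_empty m)
      have hterm : ∀ m : Fin M, |indDist P C (x, m, k) - idealDist C (x, m, k)|
          = iidPMF P n x * (K:ℝ)⁻¹ * (M:ℝ)⁻¹ := by
        intro m
        have hxC : ¬ (x = C (m, k)) := fun h => hno m h.symm
        simp only [indDist, idealDist, likEnc, if_pos hN, if_neg hxC]
        rw [mul_zero, sub_zero, abs_of_nonneg]
        exact mul_nonneg (mul_nonneg (iid_nonneg P hP n x) (by positivity)) (by positivity)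
      rw [Finset.sum_congr rfl fun m _ => hterm m, Finset.sum_const, Finset.card_univ,
        Fintype.card_fin, hemp, hN]
      rw [nsmul_eq_mul]
      push_cast
      rw [zero_div, sub_zero, abs_of_nonneg (iid_nonneg P hP n x)]
      field_simp
    · set N := (Finset.univ.filter (fun m' : Fin M => C (m', k) = x)).card with hNdef
      have hterm1 : ∀ m : Fin M, C (m, k) = x →
          |indDist P C (x, m, k) - idealDist C (x, m, k)|
            = |iidPMF P n x * (K:ℝ)⁻¹ * (N:ℝ)⁻¹ - ((M:ℝ) * K)⁻¹| := by
        intro m hm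
        simp only [indDist, idealDist, likEnc, ← hNdef, if_neg hN, if_pos hm, if_pos hm.symm, mul_one]
      have hterm2 : ∀ m : Fin M, ¬ (C (m, k) = x) →
          |indDist P C (x, m, k) - idealDist C (x, m, k)| = 0 := by
        intro m hm
        have hxC : ¬ (x = C (m, k)) := fun h => hm h.symm
        simp only [indDist, idealDist, likEnc, ← hNdef, if_neg hN, if_neg hm, if_neg hxC]
        simp
      rw [← Finset.sum_filter_add_sum_filter_not Finset.univ
        (fun m : Fin M => C (m, k) = x)]
      rw [Finset.sum_congr rfl (fun m hm => hterm1 m (Finset.mem_filter.mp hm).2),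
        Finset.sum_congr rfl (fun m hm => hterm2 m
          (by simpa using (Finset.mem_filter.mp hm).2)),
        Finset.sum_const, Finset.sum_const, smul_zero, add_zero, ← hNdef]
      have hNR : (0:ℝ) < N := by
        have : 0 < N := Nat.pos_of_ne_zero hN
        exact_mod_cast this
      rw [nsmul_eq_mul, hemp]
      have hN0 : (N:ℝ) ≠ 0 := hNR.ne'
      calc (N:ℝ) * |iidPMF P n x * (K:ℝ)⁻¹ * (N:ℝ)⁻¹ - ((M:ℝ) * K)⁻¹|
          = |(N:ℝ) * (iidPMF P n x * (K:ℝ)⁻¹ * (N:ℝ)⁻¹ - ((M:ℝ) * K)⁻¹)| := by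
            rw [abs_mul, abs_of_nonneg hNR.le]
        _ = |(K:ℝ)⁻¹ * (iidPMF P n x - (N:ℝ) / M)| := by
            rw [show (N:ℝ) * (iidPMF P n x * (K:ℝ)⁻¹ * (N:ℝ)⁻¹ - ((M:ℝ) * K)⁻¹)
                = (K:ℝ)⁻¹ * (iidPMF P n x - (N:ℝ) / M) from by
              field_simp]
        _ = (K:ℝ)⁻¹ * |iidPMF P n x - (N:ℝ) / M| := by
            rw [abs_mul, abs_of_nonneg (inv_nonneg.mpr hKR.le)]
  simp only [tvDist]
  rw [Fintype.sum_prod_type]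
  calc (∑ x, ∑ p : Fin M × Fin K, |indDist P C (x, p.1, p.2) - idealDist C (x, p.1, p.2)|) / 2
      = (∑ x, ∑ k, ∑ m, |indDist P C (x, m, k) - idealDist C (x, m, k)|) / 2 := by
        congr 1
        refine Finset.sum_congr rfl fun x _ => ?_
        rw [Fintype.sum_prod_type, Finset.sum_comm]
    _ = (∑ x, ∑ k : Fin K, (K:ℝ)⁻¹ * |iidPMF P n x - empDist (fun m => C (m, k)) x|) / 2 := by
        congr 1
        exact Finset.sum_congr rfl fun x _ => Finset.sum_congr rfl fun k _ => key x k
    _ = (K:ℝ)⁻¹ * ∑ k : Fin K,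
          (∑ x, |iidPMF P n x - empDist (fun m => C (m, k)) x|) / 2 := by
        rw [Finset.sum_comm]
        rw [Finset.mul_sum]
        rw [Finset.sum_div]
        refine Finset.sum_congr rfl fun k _ => ?_
        rw [← Finset.mul_sum, Finset.sum_div]
        field_simp
        rw [← Finset.sum_div]
        ring

lemma exp_reduce {n M K : ℕ} (hP : IsPMF P) (hM : M ≠ 0) (hK : K ≠ 0) :
    ∑ C : Fin M × Fin K → (Fin n → X),
        (∏ mk, iidPMF P n (C mk)) * tvDist (indDist P C) (idealDist C)
      = ∑ c : Fin M → (Fin n → X),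
          (∏ m, iidPMF P n (c m)) * tvDist (iidPMF P n) (empDist c) := by
  set w : (Fin n → X) → ℝ := iidPMF P n with hw
  set W : (Fin M → (Fin n → X)) → ℝ := fun c => ∏ m, w (c m) with hW
  have hWsum : ∑ c : Fin M → (Fin n → X), W c = 1 := by
    rw [hW, sum_pi_prod (fun (_ : Fin M) (y : Fin n → X) => w y)]
    simp [hw, iid_sum_one P hP n]
  set f : (Fin M → (Fin n → X)) → ℝ := fun c => tvDist (iidPMF P n) (empDist c) with hf
  have hKR : (0:ℝ) < K := by positivity
  let e : (Fin M × Fin K → (Fin n → X)) ≃ (Fin K → Fin M → (Fin n → X)) :=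
    { toFun := fun C k m => C (m, k)
      invFun := fun D p => D p.2 p.1
      left_inv := fun C => rfl
      right_inv := fun D => rfl }
  calc ∑ C : Fin M × Fin K → (Fin n → X),
        (∏ mk, iidPMF P n (C mk)) * tvDist (indDist P C) (idealDist C)
      = ∑ C : Fin M × Fin K → (Fin n → X),
          (∏ k, W (e C k)) * ((K:ℝ)⁻¹ * ∑ k, f (e C k)) := by
        refine Finset.sum_congr rfl fun C _ => ?_
        rw [tv_eq P hP hM hK C]
        congr 1
        rw [Fintype.prod_prod_type, Finset.prod_comm]
        rfl
    _ = ∑ D : Fin K → Fin M → (Fin n → X), (∏ k, W (D k)) * ((K:ℝ)⁻¹ * ∑ k, f (D k)) := by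
        exact Fintype.sum_equiv e _ _ (fun C => rfl)
    _ = (K:ℝ)⁻¹ * ∑ k : Fin K,
          ∑ D : Fin K → Fin M → (Fin n → X), (∏ k', W (D k')) * f (D k) := by
        have hDk : ∀ D : Fin K → Fin M → (Fin n → X),
            (∏ k, W (D k)) * ((K:ℝ)⁻¹ * ∑ k, f (D k))
              = ∑ k, (K:ℝ)⁻¹ * ((∏ k', W (D k')) * f (D k)) := by
          intro D
          rw [Finset.mul_sum, Finset.mul_sum]
          exact Finset.sum_congr rfl fun k _ => by ring
        rw [Finset.sum_congr rfl fun D _ => hDk D, Finset.sum_comm, Finset.mul_sum]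
        exact Finset.sum_congr rfl fun k _ => by rw [Finset.mul_sum]
    _ = (K:ℝ)⁻¹ * ∑ k : Fin K, ∑ c : Fin M → (Fin n → X), W c * f c := by
        refine congrArg _ (Finset.sum_congr rfl fun k _ => ?_)
        exact sum_pi_prod_mul W hWsum f k
    _ = ∑ c : Fin M → (Fin n → X), W c * f c := by
        rw [Finset.sum_const, Finset.card_univ, Fintype.card_fin, nsmul_eq_mul, ← mul_assoc,
          inv_mul_cancel₀ hKR.ne', one_mul]

/-- Expected TV distance between the source and the empirical codeword distribution. -/
lemma exp_tv_bound {n M : ℕ} (hP : IsPMF P) (hM : M ≠ 0) (t : ℝ) (ht : 0 < t) :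
    ∑ c : Fin M → (Fin n → X), (∏ m, iidPMF P n (c m)) * tvDist (iidPMF P n) (empDist c)
      ≤ (Real.sqrt (t * M))⁻¹ / 2
        + ∑ x ∈ Finset.univ.filter (fun x : Fin n → X => ¬ (t ≤ iidPMF P n x)),
            iidPMF P n x := by
  set w : (Fin n → X) → ℝ := iidPMF P n with hw
  have hMR : (0:ℝ) < M := by positivity
  have hw0 : ∀ y, 0 ≤ w y := iid_nonneg P hP n
  have hwsum : ∑ y, w y = 1 := iid_sum_one P hP n
  have hWnn : ∀ c : Fin M → (Fin n → X), 0 ≤ ∏ m, w (c m) := fun c =>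
    Finset.prod_nonneg fun m _ => hw0 (c m)
  have hWsum : ∑ c : Fin M → (Fin n → X), ∏ m, w (c m) = 1 := by
    rw [sum_pi_prod (fun (_ : Fin M) (y : Fin n → X) => w y)]
    simp [hwsum]
  -- per-x indicator
  have hind : ∀ x : Fin n → X, ∑ y, w y * (if y = x then (1:ℝ) else 0) = w x := by
    intro x
    simp [mul_ite]
  have hemp : ∀ (x : Fin n → X) (c : Fin M → (Fin n → X)),
      empDist c x = (∑ m, (fun y => if y = x then (1:ℝ) else 0) (c m)) / M := by
    intro x c
    simp only [empDist]
    congr 1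
    simp [Finset.sum_boole]
  -- bound per typical x
  have hbdA : ∀ x : Fin n → X,
      ∑ c : Fin M → (Fin n → X), (∏ m, w (c m)) * |w x - empDist c x|
        ≤ Real.sqrt (w x / M) := by
    intro x
    have heq : ∀ c : Fin M → (Fin n → X),
        (∏ m, w (c m)) * |w x - empDist c x|
          = (∏ m, w (c m)) * |(∑ y, w y * (fun y => if y = x then (1:ℝ) else 0) y)
              - (∑ m, (fun y => if y = x then (1:ℝ) else 0) (c m)) / M| := by
      intro c
      rw [hemp x c]
      congr 3
      exact (hind x).symm
    rw [Finset.sum_congr rfl fun c _ => heq c]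
    have := exp_abs_dev_le w hw0 hwsum (fun y => if y = x then (1:ℝ) else 0)
      (fun y => by by_cases h : y = x <;> simp [h]) hM
    refine this.trans (le_of_eq ?_)
    congr 1
    rw [hind x]
  -- bound per atypical x
  have hbdB : ∀ x : Fin n → X,
      ∑ c : Fin M → (Fin n → X), (∏ m, w (c m)) * |w x - empDist c x| ≤ 2 * w x := by
    intro x
    have hEN : ∑ c : Fin M → (Fin n → X), (∏ m, w (c m)) * empDist c x = w x := by
      have : ∀ c : Fin M → (Fin n → X), (∏ m, w (c m)) * empDist c x
          = ∑ m, ((∏ i, w (c i)) * (fun y => if y = x then (1:ℝ) else 0) (c m)) / M := by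
        intro c
        rw [hemp x c, ← Finset.sum_div, ← Finset.mul_sum, mul_div_assoc]
      rw [Finset.sum_congr rfl fun c _ => this c, Finset.sum_comm]
      have : ∀ m : Fin M,
          ∑ c : Fin M → (Fin n → X),
            ((∏ i, w (c i)) * (fun y => if y = x then (1:ℝ) else 0) (c m)) / M
          = w x / M := by
        intro m
        rw [← Finset.sum_div, sum_pi_prod_mul w hwsum (fun y => if y = x then (1:ℝ) else 0) m,
          hind x]
      rw [Finset.sum_congr rfl fun m _ => this m, Finset.sum_const, Finset.card_univ,
        Fintype.card_fin, nsmul_eq_mul]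
      field_simp
    have habs : ∀ c : Fin M → (Fin n → X), |w x - empDist c x| ≤ w x + empDist c x := by
      intro c
      have h1 : 0 ≤ empDist c x := by
        simp only [empDist]
        positivity
      rw [abs_sub_le_iff]
      constructor <;> nlinarith [hw0 x]
    calc ∑ c : Fin M → (Fin n → X), (∏ m, w (c m)) * |w x - empDist c x|
        ≤ ∑ c : Fin M → (Fin n → X), (∏ m, w (c m)) * (w x + empDist c x) :=
          Finset.sum_le_sum fun c _ => mul_le_mul_of_nonneg_left (habs c) (hWnn c)
      _ = (∑ c : Fin M → (Fin n → X), (∏ m, w (c m))) * w x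
          + ∑ c : Fin M → (Fin n → X), (∏ m, w (c m)) * empDist c x := by
          rw [Finset.sum_mul, ← Finset.sum_add_distrib]
          exact Finset.sum_congr rfl fun c _ => by ring
      _ = 2 * w x := by rw [hWsum, hEN]; ring
  -- main split
  calc ∑ c : Fin M → (Fin n → X), (∏ m, w (c m)) * tvDist w (empDist c)
      = (∑ x, ∑ c : Fin M → (Fin n → X), (∏ m, w (c m)) * |w x - empDist c x|) / 2 := by
        have hpt : ∀ c : Fin M → (Fin n → X), (∏ m, w (c m)) * tvDist w (empDist c)
            = ∑ x, ((∏ m, w (c m)) * |w x - empDist c x|) / 2 := by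
          intro c
          simp only [tvDist]
          rw [← mul_div_assoc, Finset.mul_sum, Finset.sum_div]
        rw [Finset.sum_congr rfl fun c _ => hpt c, Finset.sum_comm, Finset.sum_div]
        exact Finset.sum_congr rfl fun x _ => (Finset.sum_div _ _ _).symm
    _ ≤ ((∑ x ∈ Finset.univ.filter (fun x : Fin n → X => t ≤ w x), Real.sqrt (w x / M))
          + ∑ x ∈ Finset.univ.filter (fun x : Fin n → X => ¬ (t ≤ w x)), 2 * w x) / 2 := by
        rw [← Finset.sum_filter_add_sum_filter_not Finset.univ (fun x : Fin n → X => t ≤ w x)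
          (fun x => ∑ c : Fin M → (Fin n → X), (∏ m, w (c m)) * |w x - empDist c x|)]
        apply div_le_div_of_nonneg_right ?_ (by norm_num)
        exact add_le_add (Finset.sum_le_sum fun x _ => hbdA x)
          (Finset.sum_le_sum fun x _ => hbdB x)
    _ ≤ ((Real.sqrt (t * M))⁻¹
          + ∑ x ∈ Finset.univ.filter (fun x : Fin n → X => ¬ (t ≤ w x)), 2 * w x) / 2 := by
        apply div_le_div_of_nonneg_right ?_ (by norm_num)
        exact add_le_add (typical_bound P hP n M t ht hMR) le_rfl
    _ = (Real.sqrt (t * M))⁻¹ / 2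
          + ∑ x ∈ Finset.univ.filter (fun x : Fin n → X => ¬ (t ≤ w x)), w x := by
        rw [add_div]
        congr 1
        rw [← Finset.mul_sum]
        ring

end Reduction

/-- **Lemma 3 (soft covering for the likelihood encoder).** If `R > H(X)`, then the
expected total variation distance (over the random codebook, codewords i.i.d. `∏ P_X`)
between the induced distribution `P_{X^n M K}` and the idealized distribution
`Q_{X^n M K}` vanishes as `n → ∞`. -/
theorem likelihood_encoder_soft_covering
    {X : Type*} [Fintype X] [Nonempty X]
    (P : X → ℝ) (hP : IsPMF P) (R R0 : ℝ) (hR : entropy P < R) :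
    Tendsto (fun n : ℕ =>
        ∑ C : Fin (nExp R n) × Fin (nExp R0 n) → (Fin n → X),
          (∏ mk, iidPMF P n (C mk)) * tvDist (indDist P C) (idealDist C))
      atTop (nhds 0) := by
  set H := entropy P with hH
  set δ : ℝ := (R - H) / 2 with hδdef
  have hδ : 0 < δ := by rw [hδdef]; linarith
  have hH0 : 0 ≤ H := entropy_nonneg P hP
  have hRpos : 0 < R := by linarith
  have hRe : R = H + 2 * δ := by rw [hδdef]; ring
  set Var : ℝ := ∑ a, P a * (-Real.logb 2 (P a) - H) ^ 2 with hVar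
  have hVar0 : 0 ≤ Var :=
    Finset.sum_nonneg fun a _ => mul_nonneg (hP.1 a) (sq_nonneg _)
  set b : ℕ → ℝ := fun n => Real.sqrt (2 * (2:ℝ) ^ (-(δ * n))) / 2 + Var / (n * δ ^ 2)
    with hbdef
  -- the bound sequence tends to zero
  have hb0 : Tendsto b atTop (nhds 0) := by
    have h1 : Tendsto (fun n : ℕ => (2:ℝ) ^ (-(δ * (n:ℝ)))) atTop (nhds 0) := by
      have heq : ∀ n : ℕ, (2:ℝ) ^ (-(δ * (n:ℝ))) = ((2:ℝ) ^ (-δ)) ^ (n:ℕ) := by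
        intro n
        rw [← Real.rpow_natCast ((2:ℝ) ^ (-δ)) n, ← Real.rpow_mul (by norm_num)]
        congr 1
        ring
      simp only [heq]
      exact tendsto_pow_atTop_nhds_zero_of_lt_one
        (Real.rpow_nonneg (by norm_num) _)
        (Real.rpow_lt_one_of_one_lt_of_neg (by norm_num) (by linarith))
    have h1' : Tendsto (fun n : ℕ => Real.sqrt (2 * (2:ℝ) ^ (-(δ * (n:ℝ)))) / 2)
        atTop (nhds 0) := by
      have c : Continuous fun x : ℝ => Real.sqrt (2 * x) / 2 :=
        (Real.continuous_sqrt.comp (continuous_const.mul continuous_id)).div_const 2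
      have := (c.tendsto 0).comp h1
      simpa [Function.comp_def] using this
    have h2' : Tendsto (fun n : ℕ => Var / ((n:ℝ) * δ ^ 2)) atTop (nhds 0) := by
      have heq : (fun n : ℕ => Var / ((n:ℝ) * δ ^ 2))
          = fun n : ℕ => (Var / δ ^ 2) * (1 / (n:ℝ)) := by
        funext n
        rw [mul_comm, ← div_div, div_eq_mul_one_div]
      rw [heq]
      simpa using tendsto_one_div_atTop_nhds_zero_nat.const_mul (Var / δ ^ 2)
    have h := h1'.add h2'
    rw [add_zero] at h
    exact h
  -- nonnegativity of the sequence
  apply squeeze_zero' (g := b) ?_ ?_ hb0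
  · filter_upwards with n
    apply Finset.sum_nonneg
    intro C _
    apply mul_nonneg
    · exact Finset.prod_nonneg fun mk _ => iid_nonneg P hP n (C mk)
    · simp only [tvDist]
      apply div_nonneg (Finset.sum_nonneg fun a _ => abs_nonneg _) (by norm_num)
  -- main bound
  · filter_upwards [eventually_ge_atTop 1] with n hn
    have hM : nExp R n ≠ 0 := Nat.one_le_iff_ne_zero.mp (le_max_left 1 _)
    have hK : nExp R0 n ≠ 0 := Nat.one_le_iff_ne_zero.mp (le_max_left 1 _)
    set t : ℝ := (2:ℝ) ^ (-((H + δ) * (n:ℝ))) with htdef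
    have ht : 0 < t := Real.rpow_pos_of_pos (by norm_num) _
    rw [exp_reduce P hP hM hK]
    refine (exp_tv_bound P hP hM t ht).trans ?_
    have hfilter : Finset.univ.filter (fun x : Fin n → X => ¬ (t ≤ iidPMF P n x))
        = Finset.univ.filter (fun x : Fin n → X => iidPMF P n x < t) := by
      simp only [not_le]
    rw [hfilter]
    apply add_le_add
    · -- typical part
      apply div_le_div_of_nonneg_right ?_ (by norm_num)
      -- (√(t*M))⁻¹ ≤ √(2 * 2^{-δn})
      have hMge : (2:ℝ) ^ (R * (n:ℝ)) / 2 ≤ ((nExp R n : ℕ) : ℝ) := by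
        set y : ℝ := (2:ℝ) ^ (R * (n:ℝ)) with hy
        have hy1 : 1 ≤ y := by
          rw [hy, show (1:ℝ) = (2:ℝ) ^ (0:ℝ) from (Real.rpow_zero 2).symm]
          exact Real.rpow_le_rpow_of_exponent_le (by norm_num) (by positivity)
        rcases le_or_gt y 2 with h2 | h2
        · have : (1:ℝ) ≤ ((nExp R n : ℕ) : ℝ) := by
            exact_mod_cast le_max_left 1 (Nat.floor y)
          linarith
        · have hfl : y - 1 < ((Nat.floor y : ℕ) : ℝ) := Nat.sub_one_lt_floor y
          have : ((Nat.floor y : ℕ) : ℝ) ≤ ((nExp R n : ℕ) : ℝ) := by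
            exact_mod_cast le_max_right 1 (Nat.floor y)
          linarith
      have htM : (2:ℝ) ^ (δ * (n:ℝ)) / 2 ≤ t * (nExp R n : ℕ) := by
        have hstep : t * ((2:ℝ) ^ (R * (n:ℝ)) / 2) = (2:ℝ) ^ (δ * (n:ℝ)) / 2 := by
          rw [htdef, ← mul_div_assoc, ← Real.rpow_add (by norm_num)]
          congr 2
          rw [hRe]
          ring
        rw [← hstep]
        exact mul_le_mul_of_nonneg_left hMge ht.le
      have hpos : (0:ℝ) < (2:ℝ) ^ (δ * (n:ℝ)) / 2 :=
        div_pos (Real.rpow_pos_of_pos (by norm_num) _) (by norm_num)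
      calc (Real.sqrt (t * (nExp R n : ℕ)))⁻¹
          ≤ (Real.sqrt ((2:ℝ) ^ (δ * (n:ℝ)) / 2))⁻¹ := by
            apply inv_anti₀ (Real.sqrt_pos.mpr hpos) (Real.sqrt_le_sqrt htM)
        _ = Real.sqrt (2 * (2:ℝ) ^ (-(δ * (n:ℝ)))) := by
            rw [← Real.sqrt_inv]
            congr 1
            rw [Real.rpow_neg (by norm_num), inv_div]
            ring
    · -- atypical part
      exact atypical_bound P hP n hn δ hδ
end
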